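/- Let K be a Hopf subalgebra of a finite-dimensional Hopf algebra H over a field, and suppose the centralizer C_H(K) = {a ∈ H : ak = ka for all k ∈ K} is also a Hopf subalgebra of H. If K is a normal Hopf subalgebra of H, then C_H(K) is a normal Hopf subalgebra of H. -/

import Mathlib

noncomputable section
open scoped TensorProduct

namespace PaperHopf
universe u
variable {F : Type u} [Field F] {H : Type u} [Ring H] [HopfAlgebra F H]

/-- `K` is a Hopf subalgebra of `H`: a subalgebra closed under comultiplication
(its comultiplication lands in `K ⊗ K` inside `H ⊗ H`) and under the antipode. -/
def IsHopfSub (K : Subalgebra F H) : Prop :=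
  (∀ k ∈ K, Coalgebra.comul (R := F) k ∈
      LinearMap.range (TensorProduct.map K.val.toLinearMap K.val.toLinearMap)) ∧
  (∀ k ∈ K, HopfAlgebra.antipode (R := F) k ∈ K)

/-- `∑ a₍₁₎ k τ(a₍₂₎)`, the left adjoint action of `a` on `k` (Sweedler notation). -/
def adL (a k : H) : H :=
  LinearMap.mul' F H
    (TensorProduct.map (LinearMap.mulRight F k) (HopfAlgebra.antipode (R := F))
      (Coalgebra.comul (R := F) a))

/-- `∑ τ(a₍₁₎) k a₍₂₎`, the right adjoint action of `a` on `k` (Sweedler notation). -/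
def adR (a k : H) : H :=
  LinearMap.mul' F H
    (TensorProduct.map (HopfAlgebra.antipode (R := F)) (LinearMap.mulLeft F k)
      (Coalgebra.comul (R := F) a))

/-- `K` is a normal Hopf subalgebra: `a₍₁₎ K τ(a₍₂₎) ⊆ K` and `τ(a₍₁₎) K a₍₂₎ ⊆ K`
for all `a ∈ H`. -/
def IsNormalHopfSub (K : Subalgebra F H) : Prop :=
  ∀ a : H, ∀ k ∈ K, adL (F := F) a k ∈ K ∧ adR (F := F) a k ∈ K

/-- `K` is a normal subring of `H`: for every two-sided ideal `J` of `H`, the contracted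
ideal `J ∩ K` is `H`-invariant, i.e. `H (J ∩ K) = (J ∩ K) H` (as additive subgroups
generated by the respective products). -/
def IsNormalSubring (K : Subalgebra F H) : Prop :=
  ∀ J : TwoSidedIdeal H,
    AddSubgroup.closure {x : H | ∃ h k, k ∈ J ∧ k ∈ K ∧ x = h * k} =
    AddSubgroup.closure {x : H | ∃ h k, k ∈ J ∧ k ∈ K ∧ x = k * h}

end PaperHopf

/-!
In the convolution algebra `End(H)` write `â` for the map `x ↦ ε(x) • a`: convolving `f` with `â`
on the left (right) multiplies the values of `f` by `a` on the left (right). Thus the adjoint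
actions are `adL · c = id * ĉ * S` and `adR · k = S * k̂ * id`, and commuting with `k ∈ K` becomes
commuting with `k̂`. Since `id * S = 1`, the element `k̂` commutes with `id * ĉ * S` as soon as `ĉ`
commutes with `S * k̂ * id`, which holds because the latter takes values in `K` by normality.
-/

namespace PaperHopf

open Coalgebra WithConv

section Convolution

variable {R C A : Type*} [CommSemiring R] [AddCommMonoid C] [Module R C] [Coalgebra R C]
  [Semiring A] [Algebra R A]

variable (R C) in
def constConv (a : A) : WithConv (C →ₗ[R] A) :=
  toConv (LinearMap.toSpanSingleton R A a ∘ₗ counit)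

lemma constConv_convMul_apply (a : A) (f : WithConv (C →ₗ[R] A)) (x : C) :
    (constConv R C a * f) x = a * f x := by
  rw [(ℛ R x).convMul_apply]
  conv_rhs => rw [← sum_counit_smul (ℛ R x)]
  simp [constConv, Finset.mul_sum]

lemma convMul_constConv_apply (a : A) (f : WithConv (C →ₗ[R] A)) (x : C) :
    (f * constConv R C a) x = f x * a := by
  have hx := congr(TensorProduct.rid R C $(sum_tmul_counit_eq (R := R) (ℛ R x)))
  simp only [map_sum, TensorProduct.rid_tmul, one_smul] at hx
  rw [(ℛ R x).convMul_apply]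
  conv_rhs => rw [← hx]
  simp [constConv, Finset.sum_mul]

lemma commute_constConv {a : A} {f : WithConv (C →ₗ[R] A)} (h : ∀ x, Commute a (f x)) :
    Commute (constConv R C a) f :=
  WithConv.ext <| LinearMap.ext fun x => by
    rw [constConv_convMul_apply, convMul_constConv_apply, h]

end Convolution

section Bialgebra

variable {R A : Type*} [CommSemiring R] [Semiring A] [Bialgebra R A]

lemma toConv_mulLeft (a : A) :
    toConv (LinearMap.mulLeft R a) = constConv R A a * toConv LinearMap.id :=
  WithConv.ext <| LinearMap.ext fun x => by rw [constConv_convMul_apply]; rfl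

lemma toConv_mulRight (a : A) :
    toConv (LinearMap.mulRight R a) = toConv LinearMap.id * constConv R A a :=
  WithConv.ext <| LinearMap.ext fun x => by rw [convMul_constConv_apply]; rfl

end Bialgebra

lemma commute_mul_mul_of_mul_eq_one {M : Type*} [Monoid M] {u v x y : M} (huv : u * v = 1)
    (h : Commute x (v * y * u)) : Commute y (u * x * v) := calc
  y * (u * x * v) = u * v * y * (u * x * v) := by rw [huv, one_mul]
  _ = u * (x * (v * y * u)) * v := by rw [h.eq]; simp only [mul_assoc]
  _ = u * x * v * y * (u * v) := by simp only [mul_assoc]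
  _ = u * x * v * y := by rw [huv, mul_one]

section AdjointAction

universe u

variable {F : Type u} [Field F] {H : Type u} [Ring H] [HopfAlgebra F H]

local notation "ι" => toConv (LinearMap.id : H →ₗ[F] H)
local notation "σ" => toConv (HopfAlgebra.antipode F (A := H))

lemma adL_eq_convMul (a k : H) : adL (F := F) a k = (ι * constConv F H k * σ) a := by
  rw [← toConv_mulRight]; rfl

lemma adR_eq_convMul (a k : H) : adR (F := F) a k = (σ * constConv F H k * ι) a := by
  rw [mul_assoc, ← toConv_mulLeft]; rfl

lemma adL_mem_centralizer {S : Set H} (hS : ∀ a, ∀ k ∈ S, adR (F := F) a k ∈ S)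
    {c : H} (hc : c ∈ S.centralizer) (a : H) : adL (F := F) a c ∈ S.centralizer := by
  intro k hk
  have hcomm : Commute (constConv F H c) (σ * constConv F H k * ι) :=
    commute_constConv fun x => (hc _ (adR_eq_convMul (F := F) x k ▸ hS x k hk)).symm
  rw [adL_eq_convMul, ← constConv_convMul_apply, ← convMul_constConv_apply,
    (commute_mul_mul_of_mul_eq_one LinearMap.id_mul_antipode hcomm).eq]

lemma adR_mem_centralizer {S : Set H} (hS : ∀ a, ∀ k ∈ S, adL (F := F) a k ∈ S)
    {c : H} (hc : c ∈ S.centralizer) (a : H) : adR (F := F) a c ∈ S.centralizer := by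
  intro k hk
  have hcomm : Commute (constConv F H c) (ι * constConv F H k * σ) :=
    commute_constConv fun x => (hc _ (adL_eq_convMul (F := F) x k ▸ hS x k hk)).symm
  rw [adR_eq_convMul, ← constConv_convMul_apply, ← convMul_constConv_apply,
    (commute_mul_mul_of_mul_eq_one LinearMap.antipode_mul_id hcomm).eq]

end AdjointAction

universe u

theorem normal_hopf_subalgebra_centralizer_normal_general {F : Type u} [Field F] {H : Type u} [Ring H] [HopfAlgebra F H]
    (K : Subalgebra F H) (hn : IsNormalHopfSub K) :
    IsNormalHopfSub (Subalgebra.centralizer F (K : Set H)) := fun a _ hc =>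
  ⟨adL_mem_centralizer (fun b k hk => (hn b k hk).2) hc a,
    adR_mem_centralizer (fun b k hk => (hn b k hk).1) hc a⟩

theorem normal_hopf_subalgebra_centralizer_normal {F : Type u} [Field F] {H : Type u} [Ring H] [HopfAlgebra F H]
    [FiniteDimensional F H] (K : Subalgebra F H) (hK : IsHopfSub K)
    (hC : IsHopfSub (Subalgebra.centralizer F (K : Set H)))
    (hn : IsNormalHopfSub K) :
    IsNormalHopfSub (Subalgebra.centralizer F (K : Set H)) :=
  normal_hopf_subalgebra_centralizer_normal_general K hn

end PaperHopf
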